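/- arXiv:0704.2203 — 5 statements merged into one kernel-verified Lean document; each statement's English description precedes it below -/
import Mathlib

section
/- Let D be a (v,k,λ)-difference set in a finite group G and H a subgroup of G of index r. If s is the number of elements of D in some fixed coset of H, then |s - k/r| ≤ √n · (r-1)/r, where n = k - λ. -/
/-!
Write `f(Hy) = |D ∩ Hy|` for the `r` right cosets of `H`. Counting the pairs
`(d₁, d₂) ∈ D × D` with `d₁ d₂⁻¹ ∈ H`, resp. `∈ G`, gives `∑ f = k`, `∑ f² = k + λ(|H| - 1)`
and `k² = k + λ(v - 1)`, so the deviations `t = f - k/r` satisfy `∑ t = 0` and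
`∑ t² = n(r - 1)/r`. Cauchy–Schwarz on the other `r - 1` cosets gives
`t(Hx)² = (∑_{Hy ≠ Hx} t(Hy))² ≤ (r - 1)(∑ t² - t(Hx)²)`,
i.e. `r t(Hx)² ≤ (r - 1) ∑ t²`.
-/

section

open Finset

theorem Finset.sum_card_fiber_sq {α β : Type*} [DecidableEq β] [Fintype β]
    (s : Finset α) (φ : α → β) :
    ∑ b, #{a ∈ s | φ a = b} ^ 2 = #{p ∈ s ×ˢ s | φ p.1 = φ p.2} := by
  rw [card_eq_sum_card_fiberwise (f := fun p => φ p.1) (t := univ)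
    fun _ _ => mem_coe.2 (mem_univ _)]
  refine sum_congr rfl fun b _ => ?_
  rw [sq, ← card_product, filter_filter, ← filter_product]
  congr 1
  refine filter_congr fun p _ => ?_
  constructor
  · rintro ⟨h₁, h₂⟩; exact ⟨h₁.trans h₂.symm, h₁⟩
  · rintro ⟨h, h₁⟩; exact ⟨h₁, h.symm.trans h₁⟩

theorem card_mul_sq_le_of_sum_eq_zero {ι : Type*} [Fintype ι] [DecidableEq ι] {t : ι → ℝ}
    (ht : ∑ j, t j = 0) (i : ι) :
    Fintype.card ι * t i ^ 2 ≤ (Fintype.card ι - 1) * ∑ j, t j ^ 2 := by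
  have : Nonempty ι := ⟨i⟩
  have h_rest : ∑ j ∈ univ.erase i, t j = -t i := by
    linarith [add_sum_erase univ t (mem_univ i)]
  have h_rest_sq : ∑ j ∈ univ.erase i, t j ^ 2 = ∑ j, t j ^ 2 - t i ^ 2 := by
    linarith [add_sum_erase univ (fun j => t j ^ 2) (mem_univ i)]
  have h_cs := sq_sum_le_card_mul_sum_sq (s := univ.erase i) (f := t)
  rw [h_rest, h_rest_sq, neg_sq, card_erase_of_mem (mem_univ i), card_univ,
    Nat.cast_sub Fintype.card_pos] at h_cs
  push_cast at h_cs
  linarith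

theorem sum_sub_mean_sq {ι : Type*} [Fintype ι] [Nonempty ι] (a : ι → ℝ) :
    ∑ i, (a i - (∑ j, a j) / Fintype.card ι) ^ 2
      = ∑ i, a i ^ 2 - (∑ i, a i) ^ 2 / Fintype.card ι := by
  have hr : (Fintype.card ι : ℝ) ≠ 0 := Nat.cast_ne_zero.2 Fintype.card_ne_zero
  simp only [sub_sq, sum_add_distrib, sum_sub_distrib, ← sum_mul, ← mul_sum, sum_const,
    card_univ, nsmul_eq_mul]
  field_simp
  ring

variable {G : Type*} [Group G]

theorem Subgroup.index_pos_of_finite (H : Subgroup G) [Finite (G ⧸ H)] : 0 < H.index :=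
  Nat.pos_of_ne_zero index_ne_zero_of_finite

theorem Subgroup.card_quotient_eq_index (H : Subgroup G) [Fintype (G ⧸ H)] :
    Fintype.card (G ⧸ H) = H.index := by
  rw [index_eq_card, Nat.card_eq_fintype_card]

-- `G ⧸ H` consists of left cosets; the right coset `Hd` is indexed by the left coset `d⁻¹H`.
def cosetCard (D : Finset G) (H : Subgroup G) [DecidablePred (· ∈ H)] (q : G ⧸ H) : ℕ :=
  #{d ∈ D | ((d⁻¹ : G) : G ⧸ H) = q}

theorem sum_cosetCard [Fintype G] (D : Finset G) (H : Subgroup G) [DecidablePred (· ∈ H)] :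
    ∑ q, cosetCard D H q = #D :=
  (card_eq_sum_card_fiberwise fun _ _ => mem_coe.2 (mem_univ _)).symm

variable [DecidableEq G]

def IsDifferenceSet (D : Finset G) (l : ℕ) : Prop :=
  ∀ g : G, g ≠ 1 → #{p ∈ D ×ˢ D | p.1 * p.2⁻¹ = g} = l

namespace IsDifferenceSet

variable {D : Finset G} {l : ℕ}

theorem card_filter_mul_inv_mem (hD : IsDifferenceSet D l) {T : Finset G} (hT : 1 ∈ T) :
    #{p ∈ D ×ˢ D | p.1 * p.2⁻¹ ∈ T} = #D + l * (#T - 1) := by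
  rw [card_eq_sum_card_fiberwise (s := {p ∈ D ×ˢ D | p.1 * p.2⁻¹ ∈ T})
    (f := fun p => p.1 * p.2⁻¹) (t := T) fun p hp => (mem_filter.1 hp).2,
    ← add_sum_erase _ _ hT]
  have h_one : #{p ∈ D ×ˢ D | p.1 * p.2⁻¹ = 1} = #D := by
    simp_rw [mul_inv_eq_one, ← diag_card D]
    congr 1
    ext ⟨a, b⟩
    simp only [mem_filter, mem_product, mem_diag]
    constructor
    · rintro ⟨⟨ha, -⟩, rfl⟩; exact ⟨ha, rfl⟩
    · rintro ⟨ha, rfl⟩; exact ⟨⟨ha, ha⟩, rfl⟩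
  have h_fiber (g : G) (hg : g ∈ T) :
      #{p ∈ {p ∈ D ×ˢ D | p.1 * p.2⁻¹ ∈ T} | p.1 * p.2⁻¹ = g}
        = #{p ∈ D ×ˢ D | p.1 * p.2⁻¹ = g} := by
    rw [filter_filter]
    congr 1
    exact filter_congr fun p _ => ⟨And.right, fun h => ⟨h ▸ hg, h⟩⟩
  rw [h_fiber 1 hT, h_one, sum_congr rfl fun g hg => (h_fiber g (mem_of_mem_erase hg)).trans
    (hD g (ne_of_mem_erase hg)), sum_const, card_erase_of_mem hT, smul_eq_mul, mul_comm]

variable [Fintype G]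

theorem card_mul_card (hD : IsDifferenceSet D l) :
    #D * #D = #D + l * (Fintype.card G - 1) := by
  simpa [← card_product] using hD.card_filter_mul_inv_mem (mem_univ 1)

variable (H : Subgroup G) [DecidablePred (· ∈ H)]

theorem sum_sq_cosetCard (hD : IsDifferenceSet D l) :
    ∑ q, cosetCard D H q ^ 2 = #D + l * (Nat.card H - 1) := by
  unfold cosetCard
  rw [sum_card_fiber_sq, Nat.card_eq_fintype_card, Fintype.card_subtype,
    ← hD.card_filter_mul_inv_mem (mem_filter.2 ⟨mem_univ _, H.one_mem⟩)]
  simp only [QuotientGroup.eq, inv_inv, mem_filter, mem_univ, true_and]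

theorem sum_sq_cosetCard_sub (hD : IsDifferenceSet D l) :
    ∑ q, ((cosetCard D H q : ℝ) - #D / H.index) ^ 2 = (#D - l) * (H.index - 1) / H.index := by
  have h_sum : ∑ q, (cosetCard D H q : ℝ) = #D := by exact_mod_cast sum_cosetCard D H
  have h_sum_sq : ∑ q, (cosetCard D H q : ℝ) ^ 2 = #D + l * (Nat.card H - 1) := by
    have h := congrArg (Nat.cast (R := ℝ)) (hD.sum_sq_cosetCard H)
    push_cast [Nat.cast_sub (Nat.card_pos : 0 < Nat.card H)] at h
    exact h
  have h_card_sq : (#D : ℝ) * #D = #D + l * (Nat.card H * H.index - 1) := by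
    have h := congrArg (Nat.cast (R := ℝ)) hD.card_mul_card
    rw [← Nat.card_eq_fintype_card, ← H.card_mul_index] at h
    push_cast [Nat.cast_sub (H.card_mul_index ▸ Nat.card_pos : 0 < Nat.card H * H.index)] at h
    exact h
  have h_index_ne : (H.index : ℝ) ≠ 0 := (Nat.cast_pos.2 H.index_pos_of_finite).ne'
  have h_mean := sum_sub_mean_sq fun q => (cosetCard D H q : ℝ)
  rw [h_sum, H.card_quotient_eq_index] at h_mean
  rw [h_mean, h_sum_sq, sq, h_card_sq]
  field_simp
  ring

theorem sq_cosetCard_sub_le (hD : IsDifferenceSet D l) (q : G ⧸ H) :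
    ((cosetCard D H q : ℝ) - #D / H.index) ^ 2 ≤ (#D - l) * ((H.index - 1) / H.index) ^ 2 := by
  have h_index_pos : (0 : ℝ) < H.index := Nat.cast_pos.2 H.index_pos_of_finite
  have h_sum_zero : ∑ q, ((cosetCard D H q : ℝ) - #D / H.index) = 0 := by
    rw [sum_sub_distrib, ← Nat.cast_sum, sum_cosetCard, sum_const, card_univ, nsmul_eq_mul,
      H.card_quotient_eq_index, mul_div_cancel₀ _ h_index_pos.ne', sub_self]
  have h_dev : H.index * ((cosetCard D H q : ℝ) - #D / H.index) ^ 2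
      ≤ (#D - l) * (H.index - 1) ^ 2 / H.index := by
    calc _ ≤ (H.index - 1) * ∑ q, ((cosetCard D H q : ℝ) - #D / H.index) ^ 2 := by
          simpa only [H.card_quotient_eq_index] using card_mul_sq_le_of_sum_eq_zero h_sum_zero q
      _ = _ := by rw [hD.sum_sq_cosetCard_sub H]; ring
  rw [le_div_iff₀ h_index_pos] at h_dev
  rw [div_pow, ← mul_div_assoc, le_div_iff₀ (by positivity)]
  linear_combination h_dev

theorem abs_cosetCard_sub_le (hD : IsDifferenceSet D l) (q : G ⧸ H) :
    |(cosetCard D H q : ℝ) - #D / H.index| ≤ √(#D - l) * (H.index - 1) / H.index := by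
  have h_ratio_nonneg : (0 : ℝ) ≤ (H.index - 1) / H.index :=
    div_nonneg (sub_nonneg.2 (Nat.one_le_cast.2 H.index_pos_of_finite)) (Nat.cast_nonneg _)
  calc _ ≤ √((#D - l) * ((H.index - 1) / H.index) ^ 2) :=
        Real.abs_le_sqrt (hD.sq_cosetCard_sub_le H q)
    _ = √(#D - l) * (H.index - 1) / H.index := by
        rw [Real.sqrt_mul' _ (sq_nonneg _), Real.sqrt_sq h_ratio_nonneg, mul_div_assoc]

end IsDifferenceSet

end

theorem stmt1_general {G : Type*} [Group G] [Fintype G] [DecidableEq G]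
    (k l : ℕ) (D : Finset G)
    (hk : D.card = k)
    (hD : ∀ g : G, g ≠ 1 →
      ((D ×ˢ D).filter (fun p => p.1 * p.2⁻¹ = g)).card = l)
    (H : Subgroup G) [DecidablePred (· ∈ H)] (r : ℕ) (hr : H.index = r)
    (x : G) (s : ℕ) (hs : s = (D.filter (fun d => d * x⁻¹ ∈ H)).card) :
    |(s : ℝ) - (k : ℝ) / r| ≤ Real.sqrt ((k : ℝ) - l) * ((r : ℝ) - 1) / r := by
  have h_coset : (D.filter (fun d => d * x⁻¹ ∈ H)).card = cosetCard D H (x⁻¹ : G) := by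
    simp only [cosetCard, QuotientGroup.eq, inv_inv]
  subst hk hr hs
  rw [h_coset]
  exact IsDifferenceSet.abs_cosetCard_sub_le H hD _

/-- If `D` is a `(v,k,λ)`-difference set in a finite group `G` and `H` a subgroup
of index `r`, and `s` is the number of elements of `D` in the coset `Hx`, then
`|s - k/r| ≤ √n · (r-1)/r` where `n = k - λ`. -/
theorem stmt1 {G : Type*} [Group G] [Fintype G] [DecidableEq G]
    (v k l : ℕ) (D : Finset G)
    (hv : Fintype.card G = v) (hk : D.card = k)
    (hD : ∀ g : G, g ≠ 1 →
      ((D ×ˢ D).filter (fun p => p.1 * p.2⁻¹ = g)).card = l)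
    (H : Subgroup G) [DecidablePred (· ∈ H)] (r : ℕ) (hr : H.index = r)
    (x : G) (s : ℕ) (hs : s = (D.filter (fun d => d * x⁻¹ ∈ H)).card) :
    |(s : ℝ) - (k : ℝ) / r| ≤ Real.sqrt ((k : ℝ) - l) * ((r : ℝ) - 1) / r :=
  stmt1_general k l D hk hD H r hr x s hs
end

section
/- Let D be a normalized (v,k,λ)-difference set in a finite abelian group G with gcd(v,k) = 1, and let σ be an automorphism of G that is a multiplier of D (i.e., σ(D) = gD for some g ∈ G). Then σ(D) = D, i.e., σ fixes D setwise. -/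
/-! Comparing the products of the elements of `σ(D)` and of `gD` gives `1 = g ^ k`, since `σ`
preserves the product `1` of `D`. As also `g ^ v = 1` and `gcd(v, k) = 1`, the translate `g`
is trivial. -/

theorem Finset.prod_image_mul_left {G : Type*} [CommGroup G] [DecidableEq G] (s : Finset G)
    (g : G) : ∏ x ∈ s.image (g * ·), x = g ^ s.card * ∏ x ∈ s, x := by
  rw [prod_image fun _ _ _ _ h => mul_left_cancel h, prod_mul_distrib, prod_const]

theorem eq_one_of_image_eq_image_mul_left {G : Type*} [CommGroup G] [Fintype G] [DecidableEq G]
    {s : Finset G} (hprod : ∏ x ∈ s, x = 1) (hcop : Nat.Coprime (Fintype.card G) s.card)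
    (σ : G ≃* G) {g : G} (hg : s.image σ = s.image (g * ·)) : g = 1 := by
  have hgk : g ^ s.card = 1 := by
    have h := congrArg (∏ x ∈ ·, x) hg
    rw [Finset.prod_image fun _ _ _ _ h => σ.injective h, ← map_prod σ, hprod, map_one,
      Finset.prod_image_mul_left, hprod, mul_one] at h
    exact h.symm
  simpa [hcop] using pow_gcd_eq_one.mpr ⟨pow_card_eq_one, hgk⟩

theorem stmt4_general {G : Type*} [CommGroup G] [Fintype G] [DecidableEq G]
    (v k : ℕ) (D : Finset G)
    (hv : Fintype.card G = v) (hk : D.card = k)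
    (hgcd : Nat.gcd v k = 1)
    (hnorm : ∏ d ∈ D, d = 1)
    (σ : G ≃* G)
    (hmult : ∃ g : G, D.image σ = D.image (fun d => g * d)) :
    D.image σ = D := by
  obtain ⟨g, hg⟩ := hmult
  have hg1 : g = 1 := eq_one_of_image_eq_image_mul_left hnorm (hv ▸ hk ▸ hgcd) σ hg
  simp [hg, hg1]

/-- If `D` is a normalized `(v,k,λ)`-difference set in a finite abelian group `G`
with `gcd(v,k) = 1` and `σ` is an automorphism of `G` that is a multiplier of `D`
(i.e. `σ(D) = gD` for some `g`), then `σ(D) = D`. -/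
theorem stmt4 {G : Type*} [CommGroup G] [Fintype G] [DecidableEq G]
    (v k l : ℕ) (D : Finset G)
    (hv : Fintype.card G = v) (hk : D.card = k)
    (hD : ∀ g : G, g ≠ 1 →
      ((D ×ˢ D).filter (fun p => p.1 * p.2⁻¹ = g)).card = l)
    (hgcd : Nat.gcd v k = 1)
    (hnorm : ∏ d ∈ D, d = 1)
    (σ : G ≃* G)
    (hmult : ∃ g : G, D.image σ = D.image (fun d => g * d)) :
    D.image σ = D :=
  stmt4_general v k D hv hk hgcd hnorm σ hmult
end

section
/- Let q ≥ 2 be an integer and s an odd positive integer. Then gcd(q⁴ - 1, (q^s + 1)(q^{2s} + 1)) = (q + 1)(q² + 1). -/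
/-!
Write `q = a + 1`. Then `q ^ 4 - 1 = a * ((q + 1) * (q ^ 2 + 1))`, while for odd `s` both
`q ^ s + 1 = (q + 1) * (1 + a * c)` and `(q ^ 2) ^ s + 1 = (q ^ 2 + 1) * (1 + a * c')`,
because `x ^ s ≡ x` modulo `x ^ 2 - 1` and `q ^ 2 - 1` is a multiple of `a`. Hence both numbers
are multiples of `(q + 1) * (q ^ 2 + 1)` with cofactors `a` and `1 + a * C`, which are coprime.
-/

section CommSemiring

variable {R : Type*} [CommSemiring R]

theorem exists_add_one_pow_eq_one_add_mul (b : R) (m : ℕ) : ∃ d, (b + 1) ^ m = 1 + b * d := by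
  induction m with
  | zero => exact ⟨0, by simp⟩
  | succ m ih =>
    obtain ⟨d, hd⟩ := ih
    exact ⟨1 + d * (b + 1), by rw [pow_succ, hd]; ring⟩

theorem exists_add_one_pow_add_one_eq_of_odd (a : R) {n : ℕ} (hn : Odd n) :
    ∃ c, (a + 1) ^ n + 1 = (a + 1 + 1) * (1 + a * c) := by
  obtain ⟨m, rfl⟩ := hn
  obtain ⟨d, hd⟩ := exists_add_one_pow_eq_one_add_mul (a * (a + 2)) m
  have hsq : (a + 1) ^ 2 = a * (a + 2) + 1 := by ring
  refine ⟨(a + 1) * d, ?_⟩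
  rw [pow_succ, pow_mul, hsq, hd]
  ring

end CommSemiring

theorem stmt9_general (q s : ℕ) (hq : 2 ≤ q) (hs : Odd s) :
    Nat.gcd (q ^ 4 - 1) ((q ^ s + 1) * (q ^ (2 * s) + 1))
      = (q + 1) * (q ^ 2 + 1) := by
  obtain ⟨a, rfl⟩ : ∃ a, q = a + 1 := ⟨q - 1, by omega⟩
  obtain ⟨c₁, h₁⟩ := exists_add_one_pow_add_one_eq_of_odd a hs
  obtain ⟨c₂, h₂⟩ := exists_add_one_pow_add_one_eq_of_odd (a * (a + 2)) hs
  rw [show a * (a + 2) + 1 = (a + 1) ^ 2 by ring] at h₂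
  have hM : (a + 1) ^ 4 - 1 = a * ((a + 1 + 1) * ((a + 1) ^ 2 + 1)) :=
    Nat.sub_eq_of_eq_add (by ring)
  have hN : ((a + 1) ^ s + 1) * ((a + 1) ^ (2 * s) + 1)
      = (1 + a * (c₁ + (a + 2) * c₂ + a * (a + 2) * c₁ * c₂)) *
          ((a + 1 + 1) * ((a + 1) ^ 2 + 1)) := by
    rw [pow_mul, h₁, h₂]
    ring
  rw [hM, hN, Nat.gcd_mul_right, Nat.Coprime.gcd_eq_one, one_mul]
  exact (Nat.coprime_add_mul_left_right a 1 _).mpr (Nat.coprime_one_right a)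

/-- For `q ≥ 2` and odd positive `s`,
`gcd(q⁴ - 1, (q^s + 1)(q^{2s} + 1)) = (q + 1)(q² + 1)`. -/
theorem stmt9 (q s : ℕ) (hq : 2 ≤ q) (hs : Odd s) (hs' : 0 < s) :
    Nat.gcd (q ^ 4 - 1) ((q ^ s + 1) * (q ^ (2 * s) + 1))
      = (q + 1) * (q ^ 2 + 1) :=
  stmt9_general q s hq hs
end

section
/- Let q ≥ 2 be a power of a prime and set v = (q+1)(q²+1), k = q²+q+1, λ = q+1. Suppose s₁, ..., s_{q+1} are nonnegative integers with ∑sᵢ = k, ∑sᵢ² = λ(q²+1) + q², and sᵢ ≡ s_j (mod q) for all i,j. Then exactly one of the sᵢ equals 1 and the rest equal q + 1. -/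
/-!
The two equations say exactly that `∑ (sᵢ - 1)(sᵢ - 1 - q) = 0`. Comparing `∑ sᵢ` with
`(q + 1) s₁` modulo `q` shows every `sᵢ ≡ 1 (mod q)`, i.e. `sᵢ = 1 + q tᵢ` with `tᵢ` an
integer, so each summand `q² tᵢ (tᵢ - 1)` is nonnegative and hence zero: every `sᵢ` is
`1` or `q + 1`. Then `∑ sᵢ = q² + q + 1` forces exactly one of them to be `1`.
-/

open Finset

theorem Nat.ModEq.card_mul_modEq_sum {ι : Type*} [Fintype ι] {n : ℕ} {f : ι → ℕ}
    (h : ∀ i j, f i ≡ f j [MOD n]) (i : ι) : Fintype.card ι * f i ≡ ∑ j, f j [MOD n] := by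
  simpa using Nat.ModEq.sum (s := univ) fun j _ => h i j

theorem modEq_one_of_sum_eq {q : ℕ} {s : Fin (q + 1) → ℕ} (hsum : ∑ i, s i = q ^ 2 + q + 1)
    (hmod : ∀ i j, s i ≡ s j [MOD q]) (i : Fin (q + 1)) : s i ≡ 1 [MOD q] := by
  have h := Nat.ModEq.card_mul_modEq_sum hmod i
  rw [hsum, Fintype.card_fin] at h
  rw [← ZMod.natCast_eq_natCast_iff] at h ⊢
  simpa using h

theorem Int.mul_sub_one_sub_nonneg_of_modEq {x q : ℤ} (h : x ≡ 1 [ZMOD q]) :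
    0 ≤ (x - 1) * (x - 1 - q) := by
  obtain ⟨t, ht⟩ := h.symm.dvd
  have : 0 ≤ t * (t - 1) := by rcases le_or_gt t 0 with h | h <;> nlinarith
  calc 0 ≤ q ^ 2 * (t * (t - 1)) := by positivity
    _ = (x - 1) * (x - 1 - q) := by rw [ht]; ring

theorem sum_sub_one_mul_sub_one_sub_eq_zero {q : ℕ} {s : Fin (q + 1) → ℕ}
    (h1 : ∑ i, s i = q ^ 2 + q + 1) (h2 : ∑ i, (s i) ^ 2 = (q + 1) * (q ^ 2 + 1) + q ^ 2) :
    ∑ i, ((s i : ℤ) - 1) * (s i - 1 - q) = 0 := by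
  have h1' : ∑ i, (s i : ℤ) = q ^ 2 + q + 1 := by exact_mod_cast h1
  have h2' : ∑ i, (s i : ℤ) ^ 2 = (q + 1) * (q ^ 2 + 1) + q ^ 2 := by exact_mod_cast h2
  calc ∑ i, ((s i : ℤ) - 1) * (s i - 1 - q)
      = ∑ i, (s i : ℤ) ^ 2 - (q + 2) * ∑ i, (s i : ℤ) + (q + 1) * (q + 1) := by
        have hconst : ((q : ℤ) + 1) * (q + 1) = ∑ _i : Fin (q + 1), ((q : ℤ) + 1) := by simp
        rw [hconst, mul_sum, ← sum_sub_distrib, ← sum_add_distrib]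
        exact sum_congr rfl fun i _ => by ring
    _ = 0 := by rw [h1', h2']; ring

theorem existsUnique_eq_one_of_forall_eq_one_or_eq {ι : Type*} [Fintype ι] {q : ℕ} (hq : 0 < q)
    {s : ι → ℕ} (hs : ∀ i, s i = 1 ∨ s i = q + 1)
    (hsum : ∑ i, s i + q = Fintype.card ι * (q + 1)) :
    ∃! i, s i = 1 ∧ ∀ j ≠ i, s j = q + 1 := by
  have hpoint : ∀ i, s i + q * (if s i = 1 then 1 else 0) = q + 1 := by
    intro i
    rcases hs i with h | h <;> simp [h]
    omega
  have hcount : ∑ i, s i + q * #{i | s i = 1} = Fintype.card ι * (q + 1) := by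
    rw [card_filter, mul_sum, ← sum_add_distrib, sum_congr rfl fun i _ => hpoint i]
    simp
  have hone : #{i | s i = 1} = 1 := by
    have : q * #{i | s i = 1} = q * 1 := by omega
    exact Nat.eq_of_mul_eq_mul_left hq this
  obtain ⟨i, hi, huniq⟩ := (Fintype.existsUnique_iff_card_one _).2 hone
  exact ⟨i, ⟨hi, fun j hj => (hs j).resolve_left fun h => hj (huniq j h)⟩,
    fun j hj => huniq j hj.1⟩

theorem stmt11_general (q : ℕ) (hq : 2 ≤ q)
    (s : Fin (q + 1) → ℕ)
    (h1 : ∑ i, s i = q ^ 2 + q + 1)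
    (h2 : ∑ i, (s i) ^ 2 = (q + 1) * (q ^ 2 + 1) + q ^ 2)
    (h3 : ∀ i j, s i ≡ s j [MOD q]) :
    ∃! i : Fin (q + 1), s i = 1 ∧ ∀ j ≠ i, s j = q + 1 := by
  have hnonneg : ∀ i ∈ univ, 0 ≤ ((s i : ℤ) - 1) * (s i - 1 - q) := fun i _ =>
    Int.mul_sub_one_sub_nonneg_of_modEq
      (by exact_mod_cast Int.natCast_modEq_iff.2 (modEq_one_of_sum_eq h1 h3 i))
  have hzero := (sum_eq_zero_iff_of_nonneg hnonneg).1 (sum_sub_one_mul_sub_one_sub_eq_zero h1 h2)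
  have hvals : ∀ i, s i = 1 ∨ s i = q + 1 := fun i => by
    rcases mul_eq_zero.1 (hzero i (mem_univ i)) with h | h
    · left; omega
    · right; omega
  exact existsUnique_eq_one_of_forall_eq_one_or_eq (by omega) hvals (by simp [h1]; ring)

/-- Let `q ≥ 2` be a prime power, `v = (q+1)(q²+1)`, `k = q²+q+1`, `λ = q+1`.
If `s₁,…,s_{q+1}` are nonnegative integers with `∑ sᵢ = k`,
`∑ sᵢ² = λ(q²+1) + q²`, and all `sᵢ` congruent modulo `q`, then exactly one of
the `sᵢ` is `1` and the rest equal `q + 1`. -/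
theorem stmt11 (q : ℕ) (hq : 2 ≤ q)
    (hq' : ∃ p n : ℕ, p.Prime ∧ 0 < n ∧ q = p ^ n)
    (s : Fin (q + 1) → ℕ)
    (h1 : ∑ i, s i = q ^ 2 + q + 1)
    (h2 : ∑ i, (s i) ^ 2 = (q + 1) * (q ^ 2 + 1) + q ^ 2)
    (h3 : ∀ i j, s i ≡ s j [MOD q]) :
    ∃! i : Fin (q + 1), s i = 1 ∧ ∀ j ≠ i, s j = q + 1 :=
  stmt11_general q hq s h1 h2 h3
end

section
/- Let q ≥ 2 and s an odd prime with s ∤ q² + 1 and s ∤ q + 1. Let G be an abelian group of order (q^s+1)(q^{2s}+1) whose Sylow r-subgroups are cyclic for every prime r dividing gcd(q+1,s) or gcd(q²+1,s). Then the fixed-point subgroup of the automorphism τ: x ↦ x^{q⁴} of G has order (q+1)(q²+1). -/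
/-!
Write `q ^ s + 1 = (q + 1) u` and `q ^ (2s) + 1 = (q² + 1) v`. If a prime `p` divides both `u`
and `q⁴ - 1`, then `q ^ s ≡ -1` and `q⁴ ≡ 1` with `s` odd force `q ≡ -1 (mod p)`; but then
`u ≡ s (mod p)`, so `p = s` divides `q + 1`, which is excluded. The same holds for `v` with `q²`
in place of `q`. So `|G| = a w` with `a = (q + 1)(q² + 1)` dividing `q⁴ - 1` and `w = u v`
coprime to `q⁴ - 1`, and the elements killed by `q⁴ - 1` are exactly the `a`-torsion,
which has order `a`.
-/

open Finset

lemma coprime_card_of_forall_pow_eq_one {H : Type*} [Group H] [Finite H] {t c : ℕ}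
    (hH : ∀ x : H, x ^ t = 1) (htc : t.Coprime c) : (Nat.card H).Coprime c :=
  Nat.coprime_of_dvd fun p hp hpH hpc => by
    have : Fact p.Prime := ⟨hp⟩
    obtain ⟨x, hx⟩ := exists_prime_orderOf_dvd_card' p hpH
    have hpt : p ∣ t := hx ▸ orderOf_dvd_of_pow_eq_one (hH x)
    exact hp.one_lt.ne' (Nat.dvd_one.mp (htc ▸ Nat.dvd_gcd hpt hpc))

section CommGroup

variable {G : Type*} [CommGroup G] [Finite G]

/-- The squeeze `a * w = |ker (·^w)| * |range (·^w)| ≤ w * |ker (·^a)|`,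
with `|ker (·^a)| ∣ a`. -/
theorem card_ker_powMonoidHom_of_coprime {a w : ℕ} (hG : Nat.card G = a * w)
    (haw : a.Coprime w) : Nat.card (powMonoidHom a : G →* G).ker = a := by
  set K := (powMonoidHom a : G →* G).ker
  set L := (powMonoidHom w : G →* G).ker
  have hpos : 0 < a * w := hG ▸ Nat.card_pos
  have hK : Nat.card K ∣ a := by
    have hco := coprime_card_of_forall_pow_eq_one (H := K) (fun x => Subtype.ext x.2) haw
    exact hco.dvd_of_dvd_mul_right (hG ▸ K.card_subgroup_dvd_card)
  have hL : Nat.card L ∣ w := by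
    have hco := coprime_card_of_forall_pow_eq_one (H := L) (fun x => Subtype.ext x.2) haw.symm
    exact hco.dvd_of_dvd_mul_left (hG ▸ L.card_subgroup_dvd_card)
  have hrange : (powMonoidHom w : G →* G).range ≤ K := by
    rintro _ ⟨x, rfl⟩
    show (x ^ w) ^ a = 1
    rw [← pow_mul, mul_comm, ← hG, pow_card_eq_one']
  have hLK : a * w ≤ w * Nat.card K := calc
    a * w = Nat.card L * Nat.card (powMonoidHom w : G →* G).range := by
      rw [← Subgroup.index_ker, Subgroup.card_mul_index, hG]
    _ ≤ w * Nat.card K := Nat.mul_le_mul (Nat.le_of_dvd (Nat.pos_of_mul_pos_left hpos) hL)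
      (Subgroup.card_le_of_le hrange)
  refine le_antisymm (Nat.le_of_dvd (Nat.pos_of_mul_pos_right hpos) hK) ?_
  rw [mul_comm] at hLK
  exact Nat.le_of_mul_le_mul_left hLK (Nat.pos_of_mul_pos_left hpos)

/-- In a finite abelian group of order `a * w`, an element killed by some multiple `m` of `a`
coprime to `w` has order dividing `gcd(m, a * w)`, hence dividing `a`. -/
theorem card_pow_eq_one_of_coprime {a w m : ℕ} (hG : Nat.card G = a * w) (ham : a ∣ m)
    (hmw : m.Coprime w) : Nat.card {x : G // x ^ m = 1} = a := by
  have hiff : ∀ x : G, x ^ m = 1 ↔ x ∈ (powMonoidHom a : G →* G).ker := fun x => by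
    refine ⟨fun hx => orderOf_dvd_iff_pow_eq_one.mp ?_, fun hx => ?_⟩
    · have hxm := orderOf_dvd_of_pow_eq_one hx
      exact ((hmw.coprime_dvd_left hxm).dvd_of_dvd_mul_right (hG ▸ orderOf_dvd_natCard x))
    · obtain ⟨c, rfl⟩ := ham
      rw [pow_mul, show x ^ a = 1 from hx, one_pow]
  rw [Nat.card_congr (Equiv.subtypeEquivRight hiff)]
  exact card_ker_powMonoidHom_of_coprime hG (hmw.coprime_dvd_left ham)

end CommGroup

theorem eq_neg_one_of_pow_four_eq_one {M : Type*} [Monoid M] [HasDistribNeg M] {x : M} {s : ℕ}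
    (hs : Odd s) (h4 : x ^ 4 = 1) (hxs : x ^ s = -1) : x = -1 := by
  obtain ⟨k, rfl⟩ := hs
  have hx2 : x ^ 2 = 1 := calc
    x ^ 2 = (x ^ 4) ^ k * x ^ 2 := by rw [h4, one_pow, one_mul]
    _ = (x ^ (2 * k + 1)) ^ 2 := by rw [← pow_mul, ← pow_mul, ← pow_add]; ring_nf
    _ = 1 := by rw [hxs, neg_one_sq]
  calc x = (x ^ 2) ^ k * x := by rw [hx2, one_pow, one_mul]
    _ = -1 := by rw [← pow_mul, ← pow_succ, hxs]

/-- When `p ∣ q + 1`, the cofactor `(q ^ s + 1) / (q + 1) = ∑ q ^ i (-1) ^ (s - 1 - i)` is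
congruent to `s` modulo `p`. -/
theorem dvd_cofactor_iff {p q s u : ℕ} (hs : Odd s) (hu : q ^ s + 1 = (q + 1) * u)
    (hp : p ∣ q + 1) : p ∣ u ↔ p ∣ s := by
  have hu' : (u : ℤ) = ∑ i ∈ range s, (q : ℤ) ^ i * (-1) ^ (s - 1 - i) := by
    have hgeom := geom_sum₂_mul (q : ℤ) (-1) s
    rw [hs.neg_one_pow, sub_neg_eq_add, sub_neg_eq_add] at hgeom
    refine mul_left_cancel₀ (by positivity : (q : ℤ) + 1 ≠ 0) ?_
    rw [mul_comm _ (∑ i ∈ range s, _), hgeom]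
    exact_mod_cast hu.symm
  have hdiff : (p : ℤ) ∣ q - (-1) := by rw [sub_neg_eq_add]; exact_mod_cast hp
  have hev : Even (s - 1) := Nat.Odd.sub_odd hs odd_one
  rw [← Int.natCast_dvd_natCast, hu', dvd_geom_sum₂_iff_of_dvd_sub hdiff, hev.neg_one_pow,
    mul_one, Int.natCast_dvd_natCast]

theorem coprime_pow_four_sub_one_cofactor {q s u : ℕ} (hq : 1 ≤ q) (hs : s.Prime)
    (hsodd : Odd s) (hsq : ¬ s ∣ q + 1) (hu : q ^ s + 1 = (q + 1) * u) :
    (q ^ 4 - 1).Coprime u :=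
  Nat.coprime_of_dvd fun p hp hp4 hpu => by
    have : Fact p.Prime := ⟨hp⟩
    have h4 : (q : ZMod p) ^ 4 = 1 := by
      have h := (ZMod.natCast_eq_zero_iff _ p).mpr hp4
      rw [Nat.cast_sub (Nat.one_le_pow _ _ hq)] at h
      push_cast at h
      exact sub_eq_zero.mp h
    have hqs : (q : ZMod p) ^ s = -1 := by
      rw [eq_neg_iff_add_eq_zero]
      exact_mod_cast (ZMod.natCast_eq_zero_iff _ p).mpr (hu ▸ dvd_mul_of_dvd_right hpu _)
    have hpq : p ∣ q + 1 := by
      rw [← ZMod.natCast_eq_zero_iff]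
      push_cast
      rw [eq_neg_one_of_pow_four_eq_one hsodd h4 hqs, neg_add_cancel]
    have hps : p = s :=
      (Nat.prime_dvd_prime_iff_eq hp hs).mp ((dvd_cofactor_iff hsodd hu hpq).mp hpu)
    exact hsq (hps ▸ hpq)

theorem stmt18_general (q s : ℕ) (hq : 2 ≤ q) (hs : s.Prime) (hsodd : Odd s)
    (hs1 : ¬ s ∣ q ^ 2 + 1) (hs2 : ¬ s ∣ q + 1)
    {G : Type*} [CommGroup G] [Fintype G]
    (hG : Fintype.card G = (q ^ s + 1) * (q ^ (2 * s) + 1)) :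
    Nat.card {x : G // x ^ (q ^ 4 - 1) = 1} = (q + 1) * (q ^ 2 + 1) := by
  obtain ⟨u, hu⟩ : q + 1 ∣ q ^ s + 1 := by simpa using Odd.nat_add_dvd_pow_add_pow q 1 hsodd
  obtain ⟨v, hv⟩ : q ^ 2 + 1 ∣ (q ^ 2) ^ s + 1 := by
    simpa using Odd.nat_add_dvd_pow_add_pow (q ^ 2) 1 hsodd
  have hcu := coprime_pow_four_sub_one_cofactor (by omega) hs hsodd hs2 hu
  have hcv : (q ^ 4 - 1).Coprime v := by
    refine (coprime_pow_four_sub_one_cofactor (Nat.one_le_pow _ _ (by omega)) hs hsodd hs1 hv)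
      |>.coprime_dvd_left ?_
    rw [← pow_mul, mul_comm, pow_mul]
    simpa only [one_pow] using Nat.sub_dvd_pow_sub_pow (q ^ 4) 1 2
  have hdvd : (q + 1) * (q ^ 2 + 1) ∣ q ^ 4 - 1 :=
    ⟨q - 1, by zify [(by omega : 1 ≤ q), Nat.one_le_pow 4 q (by omega)]; ring⟩
  refine card_pow_eq_one_of_coprime (w := u * v) ?_ hdvd (hcu.mul_right hcv)
  rw [Nat.card_eq_fintype_card, hG, hu, pow_mul, hv]
  ring

/-- Let `q ≥ 2`, `s` an odd prime with `s ∤ q² + 1` and `s ∤ q + 1`, and `G` an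
abelian group of order `(q^s+1)(q^{2s}+1)` whose Sylow `r`-subgroups are cyclic
for every prime `r` dividing `gcd(q+1,s)` or `gcd(q²+1,s)`.  Then the
fixed-point subgroup `G^τ = {x : x^{q⁴-1} = 1}` of the automorphism
`τ : x ↦ x^{q⁴}` has order `(q+1)(q²+1)`. -/
theorem stmt18 (q s : ℕ) (hq : 2 ≤ q) (hs : s.Prime) (hsodd : Odd s)
    (hs1 : ¬ s ∣ q ^ 2 + 1) (hs2 : ¬ s ∣ q + 1)
    {G : Type*} [CommGroup G] [Fintype G]
    (hG : Fintype.card G = (q ^ s + 1) * (q ^ (2 * s) + 1))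
    (hsyl : ∀ r : ℕ, r.Prime →
      (r ∣ Nat.gcd (q + 1) s ∨ r ∣ Nat.gcd (q ^ 2 + 1) s) →
      ∀ P : Sylow r G, IsCyclic P) :
    Nat.card {x : G // x ^ (q ^ 4 - 1) = 1} = (q + 1) * (q ^ 2 + 1) :=
  stmt18_general q s hq hs hsodd hs1 hs2 hG
end
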